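/- arXiv:2301.12574 — 3 statements merged into one kernel-verified Lean document; each statement's English description precedes it below -/
import Mathlib

section
/- For all 2×2 complex matrices A and B, the trace of A²BAB² equals the trace of B²ABA². -/
/-!
By cyclicity of the trace, `tr (A²BAB²) - tr (B²ABA²) = tr (B A² B (AB - BA))`. For a `2 × 2` matrix,
Cayley–Hamilton gives `A² = (tr A) A - (det A) 1`, so `B A² B` is a combination of `BAB` and
`B²`, and `tr (BAB (AB - BA))`, `tr (B² (AB - BA))` both vanish because `BABBA` and `B³A` are
cyclic rotations of `BABAB` and `B²AB`.
-/

namespace Matrix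

variable {n R : Type*} [Fintype n] [DecidableEq n] [CommRing R]

theorem mul_self_eq_trace_smul_sub_det_smul_one (M : Matrix (Fin 2) (Fin 2) R) :
    M * M = M.trace • M - M.det • (1 : Matrix (Fin 2) (Fin 2) R) := by
  ext i j
  fin_cases i <;> fin_cases j <;>
    simp [Matrix.mul_apply, Fin.sum_univ_two, trace_fin_two, det_fin_two] <;> ring

theorem trace_sq_mul_mul_mul_sq_eq_of_mul_self_eq {A B : Matrix n n R} {s t : R}
    (hA : A * A = s • A + t • (1 : Matrix n n R)) :
    trace (A * A * B * A * B * B) = trace (B * B * A * B * A * A) := by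
  have hBAB : trace (B * A * B * A * B) = trace (B * A * B * B * A) := by
    simpa only [Matrix.mul_assoc] using trace_mul_comm (B * A) (B * A * B)
  have hBB : trace (B * B * A * B) = trace (B * B * B * A) := by
    simpa only [Matrix.mul_assoc] using trace_mul_comm (B * B * A) B
  calc trace (A * A * B * A * B * B)
      = trace (B * (A * A) * B * A * B) := by
        simpa only [Matrix.mul_assoc] using trace_mul_comm (A * A * B * A * B) B
    _ = s * trace (B * A * B * A * B) + t * trace (B * B * A * B) := by
        rw [hA]; simp [Matrix.mul_add, Matrix.add_mul, trace_add, trace_smul, Matrix.mul_assoc]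
    _ = s * trace (B * A * B * B * A) + t * trace (B * B * B * A) := by rw [hBAB, hBB]
    _ = trace (B * (A * A) * B * B * A) := by
        rw [hA]; simp [Matrix.mul_add, Matrix.add_mul, trace_add, trace_smul, Matrix.mul_assoc]
    _ = trace (B * B * A * B * A * A) := by
        simpa only [Matrix.mul_assoc] using trace_mul_comm (B * A * A) (B * B * A)

end Matrix

open Matrix

theorem stmt_0 (A B : Matrix (Fin 2) (Fin 2) ℂ) :
    (A * A * B * A * B * B).trace = (B * B * A * B * A * A).trace := by
  have hA : A * A = A.trace • A + (-A.det) • (1 : Matrix (Fin 2) (Fin 2) ℂ) := by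
    rw [neg_smul, ← sub_eq_add_neg]
    exact mul_self_eq_trace_smul_sub_det_smul_one A
  exact trace_sq_mul_mul_mul_sq_eq_of_mul_self_eq hA
end

section
/- Let (x,y,z,u,v) ∈ ℝ⁵ and suppose the symmetric 3×3 matrix M with rows (u, x/2, z/2), (x/2, 1, y/2), (z/2, y/2, v) is positive definite. Then there do not exist real 2×2 matrices A, B with tr A = x, tr B = y, tr(AB) = z, det A = u, det B = v. -/
/-!
If matrices `A`, `B` existed, `Q(ξ) = det(ξ₁ A + ξ₂ 1 + ξ₃ adj B)` would be a quadratic form on `ℝ³`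
whose Gram matrix is `M`. But the three vectors `A e₁`, `e₁`, `(adj B) e₁` of `ℝ²` are linearly
dependent, so some nonzero `ξ` makes `ξ₁ A + ξ₂ 1 + ξ₃ adj B` kill `e₁`; then `Q(ξ) = 0`,
contradicting positive definiteness of `M`.
-/

open Matrix

theorem Matrix.exists_ne_zero_det_sum_smul_eq_zero {K ι m : Type*} [Field K] [Fintype ι]
    [Fintype m] [DecidableEq m] [Nonempty m] (hcard : Fintype.card m < Fintype.card ι)
    (P : ι → Matrix m m K) : ∃ g : ι → K, g ≠ 0 ∧ (∑ i, g i • P i).det = 0 := by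
  let j : m := Classical.arbitrary m
  let w : m → K := Pi.single j 1
  have hdep : ¬ LinearIndependent K fun i => P i *ᵥ w := fun hli => by
    have := hli.fintype_card_le_finrank
    rw [Module.finrank_fintype_fun_eq_card] at this
    omega
  obtain ⟨g, hsum, i, hgi⟩ := Fintype.not_linearIndependent_iff.mp hdep
  refine ⟨g, fun hg => hgi (by simp [hg]), ?_⟩
  refine exists_mulVec_eq_zero_iff.mp ⟨w, by simp [w], ?_⟩
  simpa [sum_mulVec, smul_mulVec] using hsum

theorem Matrix.det_fin_two_smul_add_smul_one_add_smul_adjugate {R : Type*} [CommRing R]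
    (A B : Matrix (Fin 2) (Fin 2) R) (a b c : R) :
    (a • A + b • (1 : Matrix (Fin 2) (Fin 2) R) + c • adjugate B).det =
      a ^ 2 * A.det + b ^ 2 + c ^ 2 * B.det
        + a * b * A.trace + b * c * B.trace + a * c * (A * B).trace := by
  simp only [det_fin_two, trace_fin_two, adjugate_fin_two, mul_apply, Fin.sum_univ_two,
    add_apply, smul_apply, smul_eq_mul, one_apply_eq, one_apply_ne zero_ne_one,
    one_apply_ne one_ne_zero, of_apply, cons_val', cons_val_zero, cons_val_one,
    cons_val_fin_one]
  ring

theorem stmt_15 (x y z u v : ℝ)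
    (hM : (!![u, x/2, z/2; x/2, 1, y/2; z/2, y/2, v] : Matrix (Fin 3) (Fin 3) ℝ).PosDef) :
    ¬ ∃ A B : Matrix (Fin 2) (Fin 2) ℝ,
      A.trace = x ∧ B.trace = y ∧ (A * B).trace = z ∧ A.det = u ∧ B.det = v := by
  rintro ⟨A, B, rfl, rfl, rfl, rfl, rfl⟩
  obtain ⟨g, hg, hdet⟩ := exists_ne_zero_det_sum_smul_eq_zero (by simp) ![A, 1, adjugate B]
  have hQ := hM.dotProduct_mulVec_pos hg
  rw [Fin.sum_univ_three] at hdet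
  simp only [cons_val_zero, cons_val_one, cons_val_two, head_cons, tail_cons] at hdet
  rw [det_fin_two_smul_add_smul_one_add_smul_adjugate] at hdet
  simp only [star_trivial, dotProduct, mulVec, Fin.sum_univ_three, of_apply, cons_val',
    cons_val_zero, cons_val_one, cons_val_two, tail_cons, empty_val',
    cons_val_fin_one, vecHead] at hQ
  linarith
end

section
/- Let 4u − x² > 0, 4v − y² > 0 be real numbers with the determinant of M := [[u, x/2, z/2],[x/2, 1, y/2],[z/2, y/2, v]] at most 0. Then there exist real 2×2 matrices A, B with tr A = x, det A = u, tr B = y, det B = v, tr(AB) = z. -/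
/-!
Realise `A` and `B` as "conformal" matrices `!![p, -a; a, p]` and `!![q, -c; d, q]`: the trace and
determinant fix `p, q` and the products `a ^ 2`, `c * d`, and writing `c = b * μ⁻¹`, `d = b * μ` leaves
`tr (A * B) = x * y / 2 - a * b * (μ + μ⁻¹)`. As `μ` ranges over the nonzero reals, `μ + μ⁻¹` takes
exactly the values of absolute value at least `2`, and this requirement is `det M ≤ 0`, since
`(x * y - 2 * z) ^ 2 - 16 * (a * b) ^ 2 = -16 * det M`.
-/

open Matrix

lemma Real.exists_add_inv_eq {t : ℝ} (ht : 4 ≤ t ^ 2) : ∃ μ : ℝ, μ ≠ 0 ∧ μ + μ⁻¹ = t := by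
  set s := √(t ^ 2 - 4)
  have hs : s ^ 2 = t ^ 2 - 4 := Real.sq_sqrt (by linarith)
  have hprod : (t + s) / 2 * ((t - s) / 2) = 1 := by linear_combination -hs / 4
  refine ⟨(t + s) / 2, left_ne_zero_of_mul_eq_one hprod, ?_⟩
  rw [inv_eq_of_mul_eq_one_right hprod]
  ring

lemma Real.exists_mul_add_inv_eq {k w : ℝ} (hk : 0 < k) (h : 4 * k ^ 2 ≤ w ^ 2) :
    ∃ μ : ℝ, μ ≠ 0 ∧ k * (μ + μ⁻¹) = w := by
  obtain ⟨μ, hμ, hsum⟩ := Real.exists_add_inv_eq (t := w / k) <| by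
    rw [div_pow, le_div_iff₀ (by positivity)]
    exact h
  exact ⟨μ, hμ, by rw [hsum]; field_simp⟩

lemma Matrix.trace_conformal_mul_conformal {R : Type*} [CommRing R] (p q a c d : R) :
    (!![p, -a; a, p] * !![q, -c; d, q]).trace = 2 * p * q - a * (c + d) := by
  rw [mul_fin_two, trace_fin_two_of]
  ring

lemma Matrix.neg_sixteen_mul_det_fin_three_gram {K : Type*} [Field K] [NeZero (2 : K)]
    (x y z u v : K) :
    -16 * (!![u, x/2, z/2; x/2, 1, y/2; z/2, y/2, v] : Matrix (Fin 3) (Fin 3) K).det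
      = (x * y - 2 * z) ^ 2 - (4 * u - x ^ 2) * (4 * v - y ^ 2) := by
  simp [det_fin_three]
  field_simp
  ring

theorem stmt_17 (x y z u v : ℝ) (hu : 4 * u - x ^ 2 > 0) (hv : 4 * v - y ^ 2 > 0)
    (hdet : (!![u, x/2, z/2; x/2, 1, y/2; z/2, y/2, v] : Matrix (Fin 3) (Fin 3) ℝ).det ≤ 0) :
    ∃ A B : Matrix (Fin 2) (Fin 2) ℝ,
      A.trace = x ∧ A.det = u ∧ B.trace = y ∧ B.det = v ∧ (A * B).trace = z := by
  have hu' : 0 < u - x ^ 2 / 4 := by linarith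
  have hv' : 0 < v - y ^ 2 / 4 := by linarith
  set a := √(u - x ^ 2 / 4)
  set b := √(v - y ^ 2 / 4)
  have ha : a ^ 2 = u - x ^ 2 / 4 := Real.sq_sqrt hu'.le
  have hb : b ^ 2 = v - y ^ 2 / 4 := Real.sq_sqrt hv'.le
  have hab : 0 < a * b := mul_pos (Real.sqrt_pos.2 hu') (Real.sqrt_pos.2 hv')
  obtain ⟨μ, hμ, hsum⟩ : ∃ μ : ℝ, μ ≠ 0 ∧ a * b * (μ + μ⁻¹) = x * y / 2 - z := by
    refine Real.exists_mul_add_inv_eq hab ?_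
    have := neg_sixteen_mul_det_fin_three_gram x y z u v
    rw [mul_pow, ha, hb]
    linarith
  refine ⟨!![x / 2, -a; a, x / 2], !![y / 2, -(b * μ⁻¹); b * μ, y / 2], ?_, ?_, ?_, ?_, ?_⟩
  · rw [trace_fin_two_of]; ring
  · rw [det_fin_two_of]; linear_combination ha
  · rw [trace_fin_two_of]; ring
  · rw [det_fin_two_of]; linear_combination hb + b ^ 2 * mul_inv_cancel₀ hμ
  · rw [trace_conformal_mul_conformal]; linear_combination -hsum
end
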